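/- Let Δ ≥ 3 be an integer, let F be a graph with maximum degree at most Δ, and let Γ ⊆ V(F) be a subset of size |Γ| ≤ Δ such that deg_F(v) ≤ Δ − 1 for every v ∈ Γ. If H is the F_Γ-path of length 10 with endpoints w and w', then m(H, x) ≤ Δ − 1/2, where x = (w, w'). -/

import Mathlib

/-- The rooted density `m(F, X)`. -/
noncomputable def rootedDensity {V : Type*} (F : SimpleGraph V) (X : Set V) : ℝ :=
  sSup {x : ℝ | ∃ F' : F.Subgraph, 0 < F'.edgeSet.ncard ∧
    (X ⊆ F'.verts ∨ X ∩ F'.verts = ∅) ∧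
    x = (F'.edgeSet.ncard : ℝ) / ((F'.verts.ncard : ℝ) - max 1 ((X ∩ F'.verts).ncard : ℝ))}

/-- The `F_Γ`-path of length `10`: six outside vertices `Sum.inl j` (`j : Fin 6`, the
vertex `Sum.inl j` being at position `2j` on the path) and five copies of `F` (the copy
`Sum.inr (i, ·)` lying between the outside vertices `i` and `i + 1`); each outside vertex
is joined to all vertices of `Γ` in each of its neighbouring copies of `F`. -/
def FGammaPath {V : Type*} (F : SimpleGraph V) (Γ : Set V) :
    SimpleGraph (Fin 6 ⊕ Fin 5 × V) :=
  SimpleGraph.fromRel fun a b =>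
    match a, b with
    | Sum.inr (i, u), Sum.inr (i', v) => i = i' ∧ F.Adj u v
    | Sum.inl j, Sum.inr (i, u) => u ∈ Γ ∧ ((j : ℕ) = (i : ℕ) ∨ (j : ℕ) = (i : ℕ) + 1)
    | _, _ => False

/-!
Let `H'` be a subgraph of the `F_Γ`-path with `e` edges and `v` vertices, let `b_j ∈ {0, 1}` record
which outside vertices lie in `H'`, and let copy `i` of `F` meet `H'` in `c_i` vertices, `g_i` of
them in `Γ`. Counting `2e` through the degrees of the inside vertices only (an edge to an outside
vertex is counted twice there), a copy contributes at most
`Δ c_i + (2 (b_i + b_{i+1}) - 1) g_i ≤ (2Δ - 1) c_i + Δ b_i b_{i+1}`, using `g_i ≤ |Γ| ≤ Δ`.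
So `2e ≤ (2Δ - 1)(v - B) + Δ P` with `B = ∑ b_j` and `P = ∑ b_i b_{i+1}`, and the inequality
`3P + 5t ≤ 5B` for the `0/1`-sequence `b`, where `t = max 1 |{w, w'} ∩ V(H')| = b_0 + 1`, gives
`Δ P ≤ (2Δ - 1)(B - t)`. If no outside vertex is present, `H'` has maximum degree `Δ` and
`2e ≤ min (Δ v) (v (v - 1))` suffices.
-/

open Finset

namespace SimpleGraph.Subgraph

section Fintype

variable {W : Type*} [Fintype W] {G : SimpleGraph W} (G' : G.Subgraph)

open scoped Classical in
theorem sum_card_adj_eq_two_mul_ncard_edgeSet :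
    ∑ w, #{w' | G'.Adj w w'} = 2 * G'.edgeSet.ncard := by
  rw [← edgeSet_spanningCoe, ← coe_edgeFinset, Set.ncard_coe_finset,
    ← sum_degrees_eq_twice_card_edges]
  congr! with w
  rw [← card_neighborFinset_eq_degree]
  congr 1
  ext w'
  simp

open scoped Classical in
theorem card_adj_eq_zero_of_notMem {w : W} (hw : w ∉ G'.verts) : #{w' | G'.Adj w w'} = 0 :=
  card_eq_zero.mpr <| filter_eq_empty_iff.mpr fun _ _ h => hw (G'.edge_vert h)

theorem two_mul_ncard_edgeSet_le_mul_pred :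
    2 * G'.edgeSet.ncard ≤ G'.verts.ncard * (G'.verts.ncard - 1) := by
  classical
  rw [← sum_card_adj_eq_two_mul_ncard_edgeSet, Set.ncard_eq_toFinset_card', ← smul_eq_mul,
    ← sum_subset (subset_univ G'.verts.toFinset)
      fun w _ hw => G'.card_adj_eq_zero_of_notMem (by simpa using hw)]
  refine sum_le_card_nsmul _ _ _ fun w hw => ?_
  rw [← card_erase_of_mem hw]
  refine card_le_card fun w' hw' => ?_
  have h : G'.Adj w w' := (mem_filter.mp hw').2
  simpa [(G'.adj_sub h).ne'] using G'.edge_vert h.symm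

theorem two_mul_ncard_edgeSet_le_of_two_mul_le_mul {Δ : ℝ} (hΔ : 2 ≤ Δ)
    (hE : 0 < G'.edgeSet.ncard) (h : 2 * (G'.edgeSet.ncard : ℝ) ≤ Δ * G'.verts.ncard) :
    2 * (G'.edgeSet.ncard : ℝ) ≤ (2 * Δ - 1) * (G'.verts.ncard - 1) := by
  have hclique := G'.two_mul_ncard_edgeSet_le_mul_pred
  have hv2 : 2 ≤ G'.verts.ncard := by
    by_contra! hv
    have : G'.verts.ncard * (G'.verts.ncard - 1) = 0 := by interval_cases G'.verts.ncard <;> rfl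
    omega
  obtain hv | hv : G'.verts.ncard = 2 ∨ 3 ≤ G'.verts.ncard := by omega
  · rw [hv] at hclique ⊢
    have he : (G'.edgeSet.ncard : ℝ) ≤ 1 := by exact_mod_cast (by omega : G'.edgeSet.ncard ≤ 1)
    push_cast
    linarith
  · have hvR : (3 : ℝ) ≤ G'.verts.ncard := by exact_mod_cast hv
    nlinarith [mul_nonneg (by linarith : (0 : ℝ) ≤ Δ - 1)
      (by linarith : (0 : ℝ) ≤ G'.verts.ncard - 3)]

end Fintype

variable {α β : Type*} [Fintype α] [Fintype β] {G : SimpleGraph (α ⊕ β)} (G' : G.Subgraph)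

open scoped Classical in
theorem two_mul_ncard_edgeSet_eq_sum_inr (h : ∀ a a', ¬ G'.Adj (.inl a) (.inl a')) :
    2 * G'.edgeSet.ncard =
      ∑ b, (2 * #{a | G'.Adj (.inr b) (.inl a)} + #{b' | G'.Adj (.inr b) (.inr b')}) := by
  rw [← sum_card_adj_eq_two_mul_ncard_edgeSet]
  simp only [card_filter, Fintype.sum_sum_type, h, if_false, sum_const_zero, zero_add]
  rw [sum_comm]
  simp only [G'.adj_comm (.inl _), two_mul, sum_add_distrib]
  ring

end SimpleGraph.Subgraph

namespace FGammaPath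

theorem three_mul_sum_mul_succ_add_le (b : Fin 6 → ℕ) (hb : ∀ j, b j ≤ 1) (h05 : b 0 = b 5)
    (hpos : 1 ≤ ∑ j, b j) :
    3 * ∑ i : Fin 5, b i.castSucc * b i.succ + 5 * (b 0 + 1) ≤ 5 * ∑ j, b j := by
  simp only [Fin.sum_univ_six, Fin.sum_univ_five] at hpos ⊢
  change 3 * (b 0 * b 1 + b 1 * b 2 + b 2 * b 3 + b 3 * b 4 + b 4 * b 5) + _ ≤ _
  rw [← h05] at hpos ⊢
  have := hb 0; have := hb 1; have := hb 2; have := hb 3; have := hb 4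
  interval_cases b 0 <;> interval_cases b 1 <;> interval_cases b 2 <;> interval_cases b 3 <;>
    interval_cases b 4 <;> omega

theorem copy_weight_le {Δ c g : ℝ} {b b' : ℕ} (hΔ : 3 ≤ Δ) (hg : 0 ≤ g) (hgc : g ≤ c)
    (hgΔ : g ≤ Δ) (hb : b ≤ 1) (hb' : b' ≤ 1) :
    Δ * c + 2 * (b + b') * g ≤ (2 * Δ - 1) * c + g + Δ * (b * b') := by
  interval_cases b <;> interval_cases b' <;> push_cast <;>
    nlinarith [mul_nonneg (sub_nonneg.mpr hgc) (by linarith : (0 : ℝ) ≤ Δ - 3)]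

variable {V : Type*} {F : SimpleGraph V} {Γ : Set V}

@[simp]
theorem not_adj_inl_inl (j j' : Fin 6) : ¬ (FGammaPath F Γ).Adj (.inl j) (.inl j') := by
  simp [FGammaPath]

@[simp]
theorem adj_inr_inl (i : Fin 5) (u : V) (j : Fin 6) :
    (FGammaPath F Γ).Adj (.inr (i, u)) (.inl j) ↔ u ∈ Γ ∧ (j = i.castSucc ∨ j = i.succ) := by
  simp [FGammaPath, Fin.ext_iff]

@[simp]
theorem adj_inr_inr (i i' : Fin 5) (u v : V) :
    (FGammaPath F Γ).Adj (.inr (i, u)) (.inr (i', v)) ↔ i = i' ∧ F.Adj u v := by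
  simp only [FGammaPath, SimpleGraph.fromRel_adj]
  constructor
  · rintro ⟨-, h | h⟩
    exacts [h, ⟨h.1.symm, h.2.symm⟩]
  · rintro ⟨rfl, h⟩
    exact ⟨by simp [h.ne], .inl ⟨rfl, h⟩⟩

variable (H' : (FGammaPath F Γ).Subgraph)

open scoped Classical in
noncomputable def outsideIndicator (j : Fin 6) : ℕ := if .inl j ∈ H'.verts then 1 else 0

theorem outsideIndicator_le_one (j : Fin 6) : outsideIndicator H' j ≤ 1 := by
  unfold outsideIndicator; split_ifs <;> simp

theorem outsideIndicator_zero_eq_five_and_max_ncard_eq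
    (hX : {.inl 0, .inl 5} ⊆ H'.verts ∨ {.inl 0, .inl 5} ∩ H'.verts = ∅) :
    outsideIndicator H' 0 = outsideIndicator H' 5 ∧
      max 1 ((({.inl 0, .inl 5} : Set (Fin 6 ⊕ Fin 5 × V)) ∩ H'.verts).ncard : ℝ) =
        outsideIndicator H' 0 + 1 := by
  rcases hX with hX | hX
  · have h0 : .inl 0 ∈ H'.verts := hX (by simp)
    have h5 : .inl 5 ∈ H'.verts := hX (by simp)
    rw [Set.inter_eq_left.mpr hX, Set.ncard_pair (by simp)]
    norm_num [outsideIndicator, h0, h5]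
  · have h0 : .inl 0 ∉ H'.verts := fun h => hX.subset ⟨by simp, h⟩
    have h5 : .inl 5 ∉ H'.verts := fun h => hX.subset ⟨by simp, h⟩
    simp [hX, outsideIndicator, h0, h5]

open scoped Classical in
theorem card_adj_inl_le (i : Fin 5) (x : V) :
    #{j | H'.Adj (.inr (i, x)) (.inl j)} ≤
      if x ∈ Γ then outsideIndicator H' i.castSucc + outsideIndicator H' i.succ else 0 := by
  split_ifs with hx
  · calc #{j | H'.Adj (.inr (i, x)) (.inl j)}
        ≤ #{j ∈ {i.castSucc, i.succ} | .inl j ∈ H'.verts} := by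
          refine card_le_card fun j hj => ?_
          have h : H'.Adj (.inr (i, x)) (.inl j) := (mem_filter.mp hj).2
          have hj' := ((adj_inr_inl i x j).mp (H'.adj_sub h)).2
          simp only [mem_filter, mem_insert, mem_singleton]
          exact ⟨hj', H'.edge_vert h.symm⟩
      _ = _ := by
          rw [card_filter, sum_pair (Fin.castSucc_lt_succ (i := i)).ne]
          rfl
  · refine (card_eq_zero.mpr <| filter_eq_empty_iff.mpr fun j _ h => ?_).le
    exact hx ((adj_inr_inl i x j).mp (H'.adj_sub h)).1

variable [Fintype V]

open scoped Classical in
noncomputable def copyCard (i : Fin 5) : ℕ := #{x | .inr (i, x) ∈ H'.verts}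

open scoped Classical in
noncomputable def copyGammaCard (i : Fin 5) : ℕ := #{x | .inr (i, x) ∈ H'.verts ∧ x ∈ Γ}

theorem copyGammaCard_le_copyCard (i : Fin 5) : copyGammaCard H' i ≤ copyCard H' i := by
  classical
  exact card_le_card <| monotone_filter_right _ fun _ _ h => h.1

theorem copyGammaCard_le_ncard (i : Fin 5) : copyGammaCard H' i ≤ Γ.ncard := by
  classical
  rw [Set.ncard_eq_toFinset_card']
  exact card_le_card fun x hx => by simpa using (mem_filter.mp hx).2.2

theorem ncard_verts : H'.verts.ncard = ∑ j, outsideIndicator H' j + ∑ i, copyCard H' i := by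
  classical
  have : H'.verts.toFinset = ({w | w ∈ H'.verts} : Finset _) := by ext; simp
  rw [Set.ncard_eq_toFinset_card', this, card_filter, Fintype.sum_sum_type,
    Fintype.sum_prod_type]
  simp only [outsideIndicator, copyCard, card_filter]

open scoped Classical in
theorem card_adj_inr_le (i : Fin 5) (x : V) :
    #{q | H'.Adj (.inr (i, x)) (.inr q)} ≤ {y | F.Adj x y}.ncard := by
  rw [Set.ncard_eq_toFinset_card']
  refine (card_le_card fun q hq => ?_).trans (card_image_le (f := (i, ·)))
  have h : H'.Adj (.inr (i, x)) (.inr q) := (mem_filter.mp hq).2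
  obtain ⟨rfl, hxq⟩ := (adj_inr_inr i q.1 x q.2).mp (H'.adj_sub h)
  exact mem_image.mpr ⟨q.2, by simpa using hxq, rfl⟩

variable {Δ : ℕ} (hF : ∀ v, {u | F.Adj v u}.ncard ≤ Δ)
  (hΓdeg : ∀ v ∈ Γ, {u | F.Adj v u}.ncard ≤ Δ - 1)
include hF hΓdeg

open scoped Classical in
theorem two_mul_card_adj_inl_add_card_adj_inr_le (hΔ : 1 ≤ Δ) (i : Fin 5) (x : V) :
    2 * #{j | H'.Adj (.inr (i, x)) (.inl j)} + #{q | H'.Adj (.inr (i, x)) (.inr q)}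
        + (if .inr (i, x) ∈ H'.verts ∧ x ∈ Γ then 1 else 0) ≤
      (if .inr (i, x) ∈ H'.verts then Δ else 0) +
        if .inr (i, x) ∈ H'.verts ∧ x ∈ Γ then
          2 * (outsideIndicator H' i.castSucc + outsideIndicator H' i.succ) else 0 := by
  by_cases hw : .inr (i, x) ∈ H'.verts
  · have hinl := card_adj_inl_le H' i x
    have hinr := card_adj_inr_le H' i x
    by_cases hx : x ∈ Γ
    · simp only [hw, hx, and_self, if_true] at hinl ⊢
      have := hΓdeg x hx
      omega
    · simp only [hw, hx, and_false, if_true, if_false] at hinl ⊢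
      have := hF x
      omega
  · have hnadj (w) : ¬ H'.Adj (.inr (i, x)) w := fun h => hw (H'.edge_vert h)
    simp [hw, hnadj]

open scoped Classical in
theorem two_mul_ncard_edgeSet_add_sum_copyGammaCard_le (hΔ : 1 ≤ Δ) :
    2 * H'.edgeSet.ncard + ∑ i, copyGammaCard H' i ≤
      ∑ i, (Δ * copyCard H' i + 2 * (outsideIndicator H' i.castSucc +
        outsideIndicator H' i.succ) * copyGammaCard H' i) := by
  rw [H'.two_mul_ncard_edgeSet_eq_sum_inr fun a a' h => not_adj_inl_inl a a' (H'.adj_sub h),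
    Fintype.sum_prod_type, ← sum_add_distrib]
  refine sum_le_sum fun i _ => ?_
  rw [copyCard, copyGammaCard, card_filter, card_filter, mul_sum, mul_sum,
    ← sum_add_distrib, ← sum_add_distrib]
  simp only [mul_boole]
  exact sum_le_sum fun x _ => two_mul_card_adj_inl_add_card_adj_inr_le H' hF hΓdeg hΔ i x

theorem two_mul_ncard_edgeSet_le (hΔ : 3 ≤ Δ) (hΓ : Γ.ncard ≤ Δ) (hE : 0 < H'.edgeSet.ncard)
    (h05 : outsideIndicator H' 0 = outsideIndicator H' 5) :
    2 * (H'.edgeSet.ncard : ℝ) ≤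
      (2 * Δ - 1) * (H'.verts.ncard - (outsideIndicator H' 0 + 1)) := by
  set b := outsideIndicator H'
  have hmaster : 2 * (H'.edgeSet.ncard : ℝ) + ∑ i, (copyGammaCard H' i : ℝ) ≤
      ∑ i, (Δ * (copyCard H' i : ℝ) + 2 * (b i.castSucc + b i.succ) * copyGammaCard H' i) := by
    exact_mod_cast two_mul_ncard_edgeSet_add_sum_copyGammaCard_le H' hF hΓdeg (by omega)
  have hverts : (H'.verts.ncard : ℝ) = ∑ j, (b j : ℝ) + ∑ i, (copyCard H' i : ℝ) := by
    exact_mod_cast ncard_verts H'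
  have hΔR : (3 : ℝ) ≤ Δ := by exact_mod_cast hΔ
  have hG : 0 ≤ ∑ i, (copyGammaCard H' i : ℝ) := sum_nonneg fun i _ => Nat.cast_nonneg _
  rcases Nat.eq_zero_or_pos (∑ j, b j) with hB | hB
  · have hb : ∀ j, b j = 0 := fun j => sum_eq_zero_iff.mp hB j (mem_univ j)
    simp only [hb, Nat.cast_zero, zero_add, zero_mul, mul_zero, add_zero, sum_const_zero,
      ← mul_sum] at hmaster hverts ⊢
    rw [← hverts] at hmaster
    exact H'.two_mul_ncard_edgeSet_le_of_two_mul_le_mul (by linarith) hE (by linarith)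
  · have hcopy :
        ∑ i, (Δ * (copyCard H' i : ℝ) + 2 * (b i.castSucc + b i.succ) * copyGammaCard H' i) ≤
        ∑ i, ((2 * Δ - 1) * (copyCard H' i : ℝ) + copyGammaCard H' i +
          Δ * (b i.castSucc * b i.succ : ℝ)) :=
      sum_le_sum fun i _ => copy_weight_le hΔR (Nat.cast_nonneg _)
        (by exact_mod_cast copyGammaCard_le_copyCard H' i)
        (by exact_mod_cast (copyGammaCard_le_ncard H' i).trans hΓ)
        (outsideIndicator_le_one H' _) (outsideIndicator_le_one H' _)
    have hpath : 3 * ∑ i : Fin 5, (b i.castSucc * b i.succ : ℝ) + 5 * (b 0 + 1) ≤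
        5 * ∑ j, (b j : ℝ) := by
      exact_mod_cast three_mul_sum_mul_succ_add_le b (outsideIndicator_le_one H') h05 hB
    have h2e := hmaster.trans hcopy
    simp only [sum_add_distrib, ← mul_sum] at h2e
    have hP : 0 ≤ ∑ i : Fin 5, (b i.castSucc * b i.succ : ℝ) := sum_nonneg fun i _ => by positivity
    rw [hverts]
    nlinarith [mul_nonneg (by linarith : (0 : ℝ) ≤ Δ - 3)
      (by linarith : 0 ≤ ∑ j, (b j : ℝ) - (b 0 + 1))]

end FGammaPath

/-- **Lemma 5.9.** Let `Δ ≥ 3`, let `F` be a graph with maximum degree at most `Δ` and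
let `Γ ⊆ V(F)` with `|Γ| ≤ Δ` and `deg_F(v) ≤ Δ − 1` for all `v ∈ Γ`. If `H` is the
`F_Γ`-path of length `10` with endpoints `w, w'`, then `m(H, (w, w')) ≤ Δ − 1/2`. -/
theorem rootedDensity_FGammaPath_le {V : Type*} [Fintype V] (Δ : ℕ) (hΔ : 3 ≤ Δ)
    (F : SimpleGraph V) (hF : ∀ v, {u | F.Adj v u}.ncard ≤ Δ)
    (Γ : Set V) (hΓ : Γ.ncard ≤ Δ) (hΓdeg : ∀ v ∈ Γ, {u | F.Adj v u}.ncard ≤ Δ - 1) :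
    rootedDensity (FGammaPath F Γ)
        {Sum.inl (0 : Fin 6), Sum.inl (5 : Fin 6)} ≤ (Δ : ℝ) - 1 / 2 := by
  have hΔR : (3 : ℝ) ≤ Δ := by exact_mod_cast hΔ
  refine Real.sSup_le ?_ (by linarith)
  rintro _ ⟨H', hE, hX, rfl⟩
  obtain ⟨h05, hroot⟩ := FGammaPath.outsideIndicator_zero_eq_five_and_max_ncard_eq H' hX
  have hdensity := FGammaPath.two_mul_ncard_edgeSet_le H' hF hΓdeg hΔ hΓ hE h05
  have hE' : (0 : ℝ) < H'.edgeSet.ncard := by exact_mod_cast hE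
  have hpos : 0 < (H'.verts.ncard : ℝ) - (FGammaPath.outsideIndicator H' 0 + 1) :=
    pos_of_mul_pos_right (a := 2 * (Δ : ℝ) - 1) (by linarith) (by linarith)
  rw [hroot, div_le_iff₀ hpos]
  linarith
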